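/- arXiv:2406.13566 — 2 statements merged into one kernel-verified Lean document; each statement's English description precedes it below -/
import Mathlib

section
/- Let δ ∈ (0, 1/2] and let B be a symmetric real d×d matrix. Then trace(B − g_δ(B)) ≥ (1/2)|B|, where |B| is the Frobenius norm of B. -/
/-!
Diagonalise `B = U diag(λ) Uᴴ`. Both sides are then functions of the spectrum: the trace is
`∑ (λᵢ - g_δ(λᵢ))` and `|B| = (∑ λᵢ²)^{1/2} ≤ ∑ |λᵢ|`. So it suffices to prove the scalar
inequality `|s| / 2 ≤ s - g_δ(s)`, which for `s ≥ δ` is `log s ≤ s / e ≤ s / 2`, and for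
`s < δ` follows from `log δ ≤ 0` and `s / δ ≤ 1` (if `s ≥ 0`) or `s / δ ≤ 2s` (if `s < 0`,
as `1 / δ ≥ 2`).
-/

open Matrix

/-- The Frobenius norm of a real matrix. -/
noncomputable def frobNorm {d : ℕ} (A : Matrix (Fin d) (Fin d) ℝ) : ℝ :=
  Real.sqrt (∑ i, ∑ j, (A i j) ^ 2)

/-- The matrix obtained by applying a scalar function `F : ℝ → ℝ` to the spectrum of a
symmetric (Hermitian) real matrix `B`. -/
noncomputable def specApply {d : ℕ} (F : ℝ → ℝ) {B : Matrix (Fin d) (Fin d) ℝ}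
    (hB : B.IsHermitian) : Matrix (Fin d) (Fin d) ℝ :=
  (hB.eigenvectorUnitary : Matrix (Fin d) (Fin d) ℝ) *
    Matrix.diagonal (fun i => F (hB.eigenvalues i)) *
    star (hB.eigenvectorUnitary : Matrix (Fin d) (Fin d) ℝ)

/-- The regularised logarithm `g_δ`. -/
noncomputable def gReg (δ : ℝ) (s : ℝ) : ℝ :=
  if s < δ then s / δ + Real.log δ - 1 else Real.log s

namespace Real

theorem log_le_div_two {s : ℝ} (hs : 0 < s) : log s ≤ s / 2 := by
  have hlog : log (s / exp 1) ≤ s / exp 1 - 1 := log_le_sub_one_of_pos (by positivity)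
  rw [log_div hs.ne' (exp_pos 1).ne', log_exp] at hlog
  have : s / exp 1 ≤ s / 2 := div_le_div_of_nonneg_left hs.le two_pos exp_one_gt_two.le
  linarith

theorem sqrt_sum_sq_le_sum_abs {ι : Type*} (s : Finset ι) (f : ι → ℝ) :
    √(∑ i ∈ s, f i ^ 2) ≤ ∑ i ∈ s, |f i| := by
  rw [sqrt_le_left (Finset.sum_nonneg fun i _ => abs_nonneg (f i))]
  simpa only [sq_abs] using
    Finset.sum_sq_le_sq_sum_of_nonneg (s := s) (f := fun i => |f i|) fun i _ => abs_nonneg (f i)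

end Real

theorem abs_div_two_le_sub_gReg {δ : ℝ} (hδ0 : 0 < δ) (hδ1 : δ ≤ 1 / 2) (s : ℝ) :
    |s| / 2 ≤ s - gReg δ s := by
  unfold gReg
  split_ifs with hsδ
  · have hlogδ : Real.log δ ≤ 0 := Real.log_nonpos hδ0.le (by linarith)
    rcases le_or_gt 0 s with hs | hs
    · have : s / δ ≤ 1 := (div_le_one hδ0).mpr hsδ.le
      rw [abs_of_nonneg hs]
      linarith
    · have : s / δ ≤ 2 * s := by
        rw [div_le_iff₀ hδ0]
        nlinarith
      rw [abs_of_neg hs]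
      linarith
  · have hs : 0 < s := hδ0.trans_le (not_lt.mp hsδ)
    rw [abs_of_pos hs]
    linarith [Real.log_le_div_two hs]

theorem Matrix.sum_sum_sq_eq_trace_transpose_mul {m n : Type*} [Fintype m] [Fintype n]
    (A : Matrix m n ℝ) : ∑ i, ∑ j, A i j ^ 2 = (Aᵀ * A).trace := by
  simp only [trace, diag_apply, mul_apply, transpose_apply, sq]
  exact Finset.sum_comm

section specApply

variable {d : ℕ} {B : Matrix (Fin d) (Fin d) ℝ} (hB : B.IsHermitian)

theorem specApply_id : specApply id hB = B := by
  simpa [specApply, Function.comp_def] using hB.spectral_theorem.symm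

theorem specApply_mul_specApply (F G : ℝ → ℝ) :
    specApply F hB * specApply G hB = specApply (fun s => F s * G s) hB := by
  have hcancel : ∀ M : Matrix (Fin d) (Fin d) ℝ,
      star (hB.eigenvectorUnitary : Matrix (Fin d) (Fin d) ℝ) *
        ((hB.eigenvectorUnitary : Matrix (Fin d) (Fin d) ℝ) * M) = M := fun M => by
    rw [← mul_assoc, Unitary.star_mul_self_of_mem hB.eigenvectorUnitary.2, one_mul]
  simp only [specApply, mul_assoc, hcancel]
  rw [← mul_assoc (diagonal _), diagonal_mul_diagonal]

theorem trace_specApply (F : ℝ → ℝ) :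
    (specApply F hB).trace = ∑ i, F (hB.eigenvalues i) := by
  rw [specApply, trace_mul_cycle, Unitary.star_mul_self_of_mem hB.eigenvectorUnitary.2, one_mul,
    trace_diagonal]

theorem trace_sub_specApply (F : ℝ → ℝ) :
    (B - specApply F hB).trace = ∑ i, (hB.eigenvalues i - F (hB.eigenvalues i)) := by
  calc (B - specApply F hB).trace = (specApply id hB - specApply F hB).trace := by
        rw [specApply_id]
    _ = _ := by rw [trace_sub, trace_specApply, trace_specApply, ← Finset.sum_sub_distrib]; rfl

theorem frobNorm_eq_sqrt_sum_sq_eigenvalues :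
    frobNorm B = √(∑ i, hB.eigenvalues i ^ 2) := by
  have hBB : Bᵀ * B = specApply (· ^ 2) hB := by
    calc Bᵀ * B = specApply id hB * specApply id hB := by
          rw [(isHermitian_iff_isSymm.mp hB).eq, specApply_id]
      _ = specApply (· ^ 2) hB := by simp only [specApply_mul_specApply, id, sq]
  rw [frobNorm, sum_sum_sq_eq_trace_transpose_mul, hBB, trace_specApply]

theorem frobNorm_le_sum_abs_eigenvalues : frobNorm B ≤ ∑ i, |hB.eigenvalues i| :=
  (frobNorm_eq_sqrt_sum_sq_eigenvalues hB).trans_le (Real.sqrt_sum_sq_le_sum_abs _ _)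

end specApply

theorem trace_sub_gReg_ge_half_frobNorm_general {d : ℕ} (δ : ℝ)
    (hδ : δ ∈ Set.Ioc (0:ℝ) (1/2)) (B : Matrix (Fin d) (Fin d) ℝ) (hB : B.IsHermitian) :
    (1 / 2) * frobNorm B ≤ (B - specApply (gReg δ) hB).trace := by
  rw [trace_sub_specApply]
  calc (1 / 2) * frobNorm B ≤ (1 / 2) * ∑ i, |hB.eigenvalues i| := by
        gcongr; exact frobNorm_le_sum_abs_eigenvalues hB
    _ = ∑ i, |hB.eigenvalues i| / 2 := by rw [Finset.mul_sum]; simp only [one_div, inv_mul_eq_div]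
    _ ≤ ∑ i, (hB.eigenvalues i - gReg δ (hB.eigenvalues i)) :=
        Finset.sum_le_sum fun i _ => abs_div_two_le_sub_gReg hδ.1 hδ.2 _

/-- For `δ ∈ (0, 1/2]` and a symmetric real `d × d` matrix `B`,
`trace (B - g_δ(B)) ≥ (1/2) |B|`, where `|B|` is the Frobenius norm. -/
theorem trace_sub_gReg_ge_half_frobNorm {d : ℕ} (hd : 0 < d) (δ : ℝ)
    (hδ : δ ∈ Set.Ioc (0:ℝ) (1/2)) (B : Matrix (Fin d) (Fin d) ℝ) (hB : B.IsHermitian) :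
    (1 / 2) * frobNorm B ≤ (B - specApply (gReg δ) hB).trace :=
  trace_sub_gReg_ge_half_frobNorm_general δ hδ B hB
end

section
/- Let B₀ and B₁ be positive definite symmetric real d×d matrices with B₀ ≠ B₁. Then the denominator (B₁ − B₀) : (B₀⁻¹ − B₁⁻¹) is strictly positive, and the quantity λ = [ln det B₀ − ln det B₁ + B₁ : (B₀⁻¹ − B₁⁻¹)] / [(B₁ − B₀) : (B₀⁻¹ − B₁⁻¹)] satisfies 0 ≤ λ ≤ 1. -/
open Matrix

/-- The Frobenius inner product of two real matrices. -/
noncomputable def frobInner {d : ℕ} (A C : Matrix (Fin d) (Fin d) ℝ) : ℝ :=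
  ∑ i, ∑ j, A i j * C i j

/-!
The numerator `a` is the Bregman divergence between `B₁` and `B₀` of the strictly convex function
`φ = -log det`, whose gradient is `B ↦ -B⁻¹`. Bilinearity of `:` shows that the denominator is
`a + b`, with `b` the divergence in the opposite direction, so the weight `a / (a + b)` lies in
`[0, 1]` once both are positive. Conjugating by `B₀^{-1/2}` turns `a` into `∑ (μᵢ - 1 - log μᵢ)`
over the eigenvalues `μᵢ` of `B₀^{-1/2} B₁ B₀^{-1/2}`, which is positive unless all `μᵢ = 1`,
i.e. unless `B₁ = B₀`.
-/

namespace Matrix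

variable {n : Type*} [Fintype n] [DecidableEq n]

theorem IsHermitian.eq_one_of_forall_eigenvalues_eq_one {M : Matrix n n ℝ} (hM : M.IsHermitian)
    (h : ∀ i, hM.eigenvalues i = 1) : M = 1 := by
  have hspec : spectrum ℝ M ⊆ {1} := by
    rw [hM.spectrum_real_eq_range_eigenvalues]
    rintro _ ⟨i, rfl⟩
    exact h i
  rw [← cfc_id' ℝ M, cfc_congr (g := fun _ => 1) fun x hx => hspec hx, cfc_const_one ℝ M]

theorem PosDef.card_lt_trace_sub_log_det {M : Matrix n n ℝ} (hM : M.PosDef) (hM1 : M ≠ 1) :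
    (Fintype.card n : ℝ) < M.trace - Real.log M.det := by
  set μ := hM.isHermitian.eigenvalues
  obtain ⟨i₀, hi₀⟩ : ∃ i, μ i ≠ 1 := by
    by_contra! h
    exact hM1 (hM.isHermitian.eq_one_of_forall_eigenvalues_eq_one h)
  have hlog_det : Real.log M.det = ∑ i, Real.log (μ i) := by
    rw [hM.isHermitian.det_eq_prod_eigenvalues]
    exact Real.log_prod fun i _ => (hM.eigenvalues_pos i).ne'
  have htrace : M.trace = ∑ i, μ i := by
    simpa using hM.isHermitian.trace_eq_sum_eigenvalues
  calc (Fintype.card n : ℝ) = ∑ _i : n, (1 : ℝ) := by simp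
    _ < ∑ i, (μ i - Real.log (μ i)) := by
      refine Finset.sum_lt_sum (fun i _ => ?_) ⟨i₀, Finset.mem_univ _, ?_⟩
      · linarith [Real.log_le_sub_one_of_pos (hM.eigenvalues_pos i)]
      · linarith [Real.log_lt_sub_one_of_pos (hM.eigenvalues_pos i₀) hi₀]
    _ = M.trace - Real.log M.det := by rw [htrace, hlog_det, Finset.sum_sub_distrib]

open scoped MatrixOrder in
theorem PosDef.card_lt_log_det_sub_log_det_add_trace_inv_mul {A B : Matrix n n ℝ} (hA : A.PosDef)
    (hB : B.PosDef) (hne : A ≠ B) :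
    (Fintype.card n : ℝ) < Real.log A.det - Real.log B.det + (A⁻¹ * B).trace := by
  have hA' : IsStrictlyPositive A := hA.isStrictlyPositive
  set M := CFC.conjSqrt A⁻¹ B with hM_def
  have hM : M.PosDef := by
    rw [← isStrictlyPositive_iff_posDef, hM_def, nonsing_inv_eq_ringInverse,
      CFC.isStrictlyPositive_conjSqrt_iff _ _ hA'.ringInverse]
    exact hB.isStrictlyPositive
  have hM1 : M ≠ 1 := by
    rw [← CFC.conjSqrt_ringInverse_self A, hM_def, nonsing_inv_eq_ringInverse]
    exact (Function.LeftInverse.injective (CFC.conjSqrt_conjSqrt_ringInverse A)).ne hne.symm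
  have hsqrt : CFC.sqrt A⁻¹ * CFC.sqrt A⁻¹ = A⁻¹ :=
    CFC.sqrt_mul_sqrt_self _ hA.inv.posSemidef.nonneg
  have htrace : M.trace = (A⁻¹ * B).trace := by
    rw [hM_def, CFC.conjSqrt_apply, trace_mul_cycle, hsqrt]
  have hdet : M.det = A.det⁻¹ * B.det := by
    rw [hM_def, CFC.conjSqrt_apply, det_mul, det_mul, mul_right_comm, ← det_mul, hsqrt,
      det_nonsing_inv, Ring.inverse_eq_inv']
  have key := hM.card_lt_trace_sub_log_det hM1
  rw [htrace, hdet, Real.log_mul (inv_ne_zero hA.det_pos.ne') hB.det_pos.ne', Real.log_inv] at key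
  linarith

end Matrix

section LogDetDivergence

variable {d : ℕ}

theorem frobInner_eq_trace (A C : Matrix (Fin d) (Fin d) ℝ) :
    frobInner A C = (Aᵀ * C).trace := by
  simp only [frobInner, trace, diag, mul_apply, transpose_apply]
  exact Finset.sum_comm

theorem frobInner_sub_left (A A' C : Matrix (Fin d) (Fin d) ℝ) :
    frobInner (A - A') C = frobInner A C - frobInner A' C := by
  simp only [frobInner, Matrix.sub_apply, sub_mul, Finset.sum_sub_distrib]

theorem frobInner_neg_right (A C : Matrix (Fin d) (Fin d) ℝ) :
    frobInner A (-C) = -frobInner A C := by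
  simp only [frobInner, Matrix.neg_apply, mul_neg, Finset.sum_neg_distrib]

theorem frobInner_inv_sub_inv {A B : Matrix (Fin d) (Fin d) ℝ} (hB : B.IsSymm)
    (hBdet : IsUnit B.det) :
    frobInner B (A⁻¹ - B⁻¹) = (A⁻¹ * B).trace - d := by
  rw [frobInner_eq_trace, hB.eq, mul_sub, trace_sub, mul_nonsing_inv B hBdet, trace_one,
    trace_mul_comm, Fintype.card_fin]

/-- The Bregman divergence `D_φ(B, A)` of `φ = -log det`. -/
noncomputable def logDetDivergence (A B : Matrix (Fin d) (Fin d) ℝ) : ℝ :=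
  Real.log A.det - Real.log B.det + frobInner B (A⁻¹ - B⁻¹)

theorem logDetDivergence_pos {A B : Matrix (Fin d) (Fin d) ℝ} (hA : A.PosDef) (hB : B.PosDef)
    (hne : A ≠ B) : 0 < logDetDivergence A B := by
  have key := hA.card_lt_log_det_sub_log_det_add_trace_inv_mul hB hne
  have hBsymm : B.IsSymm := isHermitian_iff_isSymm.mp hB.isHermitian
  rw [Fintype.card_fin] at key
  rw [logDetDivergence, frobInner_inv_sub_inv hBsymm hB.det_pos.ne'.isUnit]
  linarith

theorem frobInner_sub_inv_sub_inv (A B : Matrix (Fin d) (Fin d) ℝ) :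
    frobInner (B - A) (A⁻¹ - B⁻¹) = logDetDivergence A B + logDetDivergence B A := by
  rw [logDetDivergence, logDetDivergence, frobInner_sub_left, ← neg_sub A⁻¹,
    frobInner_neg_right]
  ring

end LogDetDivergence

theorem interpolation_weight_mem_Icc_general {d : ℕ} (B₀ B₁ : Matrix (Fin d) (Fin d) ℝ)
    (h₀ : B₀.PosDef) (h₁ : B₁.PosDef) (hne : B₀ ≠ B₁) :
    0 < frobInner (B₁ - B₀) (B₀⁻¹ - B₁⁻¹) ∧
      (Real.log B₀.det - Real.log B₁.det + frobInner B₁ (B₀⁻¹ - B₁⁻¹)) /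
          frobInner (B₁ - B₀) (B₀⁻¹ - B₁⁻¹) ∈ Set.Icc (0:ℝ) 1 := by
  have h₀₁ := logDetDivergence_pos h₀ h₁ hne
  have h₁₀ := logDetDivergence_pos h₁ h₀ hne.symm
  rw [← logDetDivergence, frobInner_sub_inv_sub_inv]
  exact ⟨by positivity, by positivity, div_le_one_of_le₀ (by linarith) (by positivity)⟩

/-- For positive definite symmetric real `d × d` matrices `B₀ ≠ B₁`, the denominator
`(B₁ - B₀) : (B₀⁻¹ - B₁⁻¹)` is strictly positive, and the interpolation weight
`λ = [ln det B₀ - ln det B₁ + B₁ : (B₀⁻¹ - B₁⁻¹)] / [(B₁ - B₀) : (B₀⁻¹ - B₁⁻¹)]`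
satisfies `0 ≤ λ ≤ 1`. -/
theorem interpolation_weight_mem_Icc {d : ℕ} (hd : 0 < d) (B₀ B₁ : Matrix (Fin d) (Fin d) ℝ)
    (h₀ : B₀.PosDef) (h₁ : B₁.PosDef) (hne : B₀ ≠ B₁) :
    0 < frobInner (B₁ - B₀) (B₀⁻¹ - B₁⁻¹) ∧
      (Real.log B₀.det - Real.log B₁.det + frobInner B₁ (B₀⁻¹ - B₁⁻¹)) /
          frobInner (B₁ - B₀) (B₀⁻¹ - B₁⁻¹) ∈ Set.Icc (0:ℝ) 1 :=
  interpolation_weight_mem_Icc_general B₀ B₁ h₀ h₁ hne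
end
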